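/- arXiv:2108.02895 — 6 statements merged into one kernel-verified Lean document; each statement's English description precedes it below -/
import Mathlib

section
/- For subspaces Y₁, Y₂ of X, one has TC_X(Y₁ × Y₂) ≤ TC(Y₁ ∪ Y₂), where TC(Y₁ ∪ Y₂) is the (absolute) topological complexity of the subspace Y₁ ∪ Y₂. -/
open Set

/-- The relative topological complexity `TC_X(A)` for `A ⊆ X × X`. -/
noncomputable def relTC (X : Type*) [TopologicalSpace X] (A : Set (X × X)) : ℕ∞ :=
  sInf {N : ℕ∞ | ∃ k : ℕ, N = k ∧ ∃ U : Fin k → Set A,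
    (∀ i, IsOpen (U i)) ∧ (⋃ i, U i) = univ ∧
    ∀ i, ∃ s : C(U i, C(unitInterval, X)),
      ∀ p : U i, s p 0 = (p.1.1 : X × X).1 ∧ s p 1 = (p.1.1 : X × X).2}

/-- The (absolute) topological complexity `topComplexity(X) = TC_X(X × X)`. -/
noncomputable def topComplexity (X : Type*) [TopologicalSpace X] : ℕ∞ :=
  relTC X univ

/-!
A motion planner on `U ⊆ B ⊆ Y × Y` pulls back along a continuous `φ : A → B` to one on
`φ ⁻¹' U` by composing its paths with `g : Y → X`, provided `g × g` undoes `φ`. The theorem is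
the case `φ (y₁, y₂) = (y₁, y₂)` and `g` the inclusion `Y₁ ∪ Y₂ → X`.
-/

section Pullback

variable {X Y : Type*} [TopologicalSpace X] [TopologicalSpace Y]
  {A : Set (X × X)} {B : Set (Y × Y)} (φ : C(A, B)) (g : C(Y, X))

theorem exists_pathSection_preimage (hφ : ∀ p : A, Prod.map g g (φ p : Y × Y) = p)
    {U : Set B} (s : C(U, C(unitInterval, Y)))
    (hs : ∀ q : U, s q 0 = (q.1.1 : Y × Y).1 ∧ s q 1 = (q.1.1 : Y × Y).2) :
    ∃ t : C(φ ⁻¹' U, C(unitInterval, X)),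
      ∀ p : φ ⁻¹' U, t p 0 = (p.1.1 : X × X).1 ∧ t p 1 = (p.1.1 : X × X).2 := by
  refine ⟨⟨fun p => g.comp (s ⟨φ p, p.2⟩), by fun_prop⟩, fun p => ?_⟩
  obtain ⟨h0, h1⟩ := hs ⟨φ p, p.2⟩
  have hp := hφ p
  rw [Prod.ext_iff] at hp
  exact ⟨by simpa [h0] using hp.1, by simpa [h1] using hp.2⟩

theorem relTC_le_of_map (hφ : ∀ p : A, Prod.map g g (φ p : Y × Y) = p) :
    relTC X A ≤ relTC Y B := by
  refine sInf_le_sInf ?_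
  rintro _ ⟨k, rfl, U, hUo, hUcover, hs⟩
  refine ⟨k, rfl, fun i => φ ⁻¹' U i, fun i => (hUo i).preimage φ.continuous, ?_, fun i => ?_⟩
  · rw [← preimage_iUnion, hUcover, preimage_univ]
  · obtain ⟨s, hs⟩ := hs i
    exact exists_pathSection_preimage φ g hφ s hs

end Pullback

theorem stmt3 (X : Type*) [TopologicalSpace X] (Y₁ Y₂ : Set X) :
    relTC X (Y₁ ×ˢ Y₂) ≤ topComplexity ↥(Y₁ ∪ Y₂) := by
  let φ : C(↥(Y₁ ×ˢ Y₂), ↥(univ : Set (↥(Y₁ ∪ Y₂) × ↥(Y₁ ∪ Y₂)))) :=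
    ⟨fun p => ⟨(⟨p.1.1, mem_union_left _ p.2.1⟩, ⟨p.1.2, mem_union_right _ p.2.2⟩), mem_univ _⟩,
      by fun_prop⟩
  exact relTC_le_of_map φ ⟨Subtype.val, continuous_subtype_val⟩ fun _ => rfl
end

section
/- Let Y₁ and Y₂ be subspaces of a path-connected space X. Then TC_X(Y₁ × Y₂) = 1 if and only if the inclusions Y₁ ↪ X and Y₂ ↪ X are both nullhomotopic. -/
/-!
A single open set carrying a continuous motion planner over `A ⊆ X × X` is exactly a homotopy
between the two projections `A → X`. On `Y₁ × Y₂`, restricting such a homotopy to `Y₁ × {b}` and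
`{a} × Y₂` contracts the two inclusions. Conversely, if both inclusions are nullhomotopic then so
are both projections, and in a path-connected space any two nullhomotopic maps are homotopic.
-/

open Set

open ContinuousMap unitInterval

theorem ContinuousMap.homotopic_iff_exists_path_family {Y Z : Type*} [TopologicalSpace Y]
    [TopologicalSpace Z] {f g : C(Y, Z)} :
    f.Homotopic g ↔ ∃ s : C(Y, C(I, Z)), ∀ y, s y 0 = f y ∧ s y 1 = g y := by
  constructor
  · rintro ⟨H⟩
    exact ⟨(H.toContinuousMap.comp .prodSwap).curry, fun y => ⟨H.apply_zero y, H.apply_one y⟩⟩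
  · rintro ⟨s, hs⟩
    exact ⟨{ toContinuousMap := s.uncurry.comp .prodSwap
             map_zero_left := fun y => (hs y).1
             map_one_left := fun y => (hs y).2 }⟩

theorem ContinuousMap.Nullhomotopic.homotopic {Y Z : Type*} [TopologicalSpace Y]
    [TopologicalSpace Z] [PathConnectedSpace Z] {f g : C(Y, Z)} (hf : f.Nullhomotopic)
    (hg : g.Nullhomotopic) : f.Homotopic g := by
  obtain ⟨y, hy⟩ := hf
  obtain ⟨z, hz⟩ := hg
  exact hy.trans <| .trans ⟨(PathConnectedSpace.somePath y z).toHomotopyConst⟩ hz.symm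

section relTC

variable {X : Type*} [TopologicalSpace X] {A : Set (X × X)}

theorem one_le_relTC (hA : A.Nonempty) : 1 ≤ relTC X A := by
  refine le_sInf ?_
  rintro _ ⟨k, rfl, U, -, hU, -⟩
  obtain ⟨p, hp⟩ := hA
  obtain ⟨i, -⟩ := mem_iUnion.1 (hU.ge (mem_univ (⟨p, hp⟩ : A)))
  exact_mod_cast i.pos

theorem relTC_le_one_of_path_family (s : C(A, C(I, X)))
    (hs : ∀ p : A, s p 0 = p.1.1 ∧ s p 1 = p.1.2) : relTC X A ≤ 1 :=
  sInf_le ⟨1, by norm_num, fun _ => univ, fun _ => isOpen_univ, iUnion_const _,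
    fun _ => ⟨s.restrict univ, fun p => hs p⟩⟩

theorem exists_path_family_of_relTC_eq_one (h : relTC X A = 1) :
    ∃ s : C(A, C(I, X)), ∀ p : A, s p 0 = p.1.1 ∧ s p 1 = p.1.2 := by
  unfold relTC at h
  obtain ⟨k, hk, U, -, hU, hs⟩ := h ▸ csInf_mem (nonempty_iff_ne_empty.2 fun hS => by
    rw [hS, sInf_empty] at h
    exact ENat.top_ne_one h)
  obtain rfl : k = 1 := by exact_mod_cast hk.symm
  obtain ⟨s, hs⟩ := hs 0
  have hU0 : ∀ p, p ∈ U 0 := fun p => by simpa [Fin.exists_fin_one] using hU.ge (mem_univ p)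
  exact ⟨s.comp ⟨fun p => ⟨p, hU0 p⟩, by fun_prop⟩, fun p => hs _⟩

theorem relTC_eq_one_iff_homotopic (hA : A.Nonempty) :
    relTC X A = 1 ↔ (fst.restrict A).Homotopic (snd.restrict A) := by
  rw [homotopic_iff_exists_path_family]
  refine ⟨exists_path_family_of_relTC_eq_one, fun ⟨s, hs⟩ => ?_⟩
  exact le_antisymm (relTC_le_one_of_path_family s hs) (one_le_relTC hA)

end relTC

theorem homotopic_fst_snd_restrict_prod_iff {X : Type*} [TopologicalSpace X]
    [PathConnectedSpace X] {Y₁ Y₂ : Set X} (h₁ : Y₁.Nonempty) (h₂ : Y₂.Nonempty) :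
    (fst.restrict (Y₁ ×ˢ Y₂)).Homotopic (snd.restrict (Y₁ ×ˢ Y₂)) ↔
      (⟨Subtype.val, continuous_subtype_val⟩ : C(Y₁, X)).Nullhomotopic ∧
        (⟨Subtype.val, continuous_subtype_val⟩ : C(Y₂, X)).Nullhomotopic := by
  constructor
  · intro h
    obtain ⟨a, ha⟩ := h₁
    obtain ⟨b, hb⟩ := h₂
    let j₁ : C(Y₁, ↥(Y₁ ×ˢ Y₂)) := ⟨fun y => ⟨(y, b), y.2, hb⟩, by fun_prop⟩
    let j₂ : C(Y₂, ↥(Y₁ ×ˢ Y₂)) := ⟨fun y => ⟨(a, y), ha, y.2⟩, by fun_prop⟩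
    exact ⟨⟨b, h.comp (.refl j₁)⟩, ⟨a, (h.comp (.refl j₂)).symm⟩⟩
  · rintro ⟨hY₁, hY₂⟩
    let π₁ : C(↥(Y₁ ×ˢ Y₂), Y₁) := ⟨fun p => ⟨p.1.1, p.2.1⟩, by fun_prop⟩
    let π₂ : C(↥(Y₁ ×ˢ Y₂), Y₂) := ⟨fun p => ⟨p.1.2, p.2.2⟩, by fun_prop⟩
    exact (hY₁.comp_left π₁).homotopic (hY₂.comp_left π₂)

/-- For nonempty subspaces `Y₁, Y₂` of a path-connected space `X`,
`TC_X(Y₁ × Y₂) = 1` iff the inclusions `Y₁ ↪ X` and `Y₂ ↪ X` are both nullhomotopic. -/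
theorem stmt5 (X : Type*) [TopologicalSpace X] [PathConnectedSpace X]
    (Y₁ Y₂ : Set X) (h₁ : Y₁.Nonempty) (h₂ : Y₂.Nonempty) :
    relTC X (Y₁ ×ˢ Y₂) = 1 ↔
      (ContinuousMap.Nullhomotopic
          (⟨Subtype.val, continuous_subtype_val⟩ : C(Y₁, X)) ∧
       ContinuousMap.Nullhomotopic
          (⟨Subtype.val, continuous_subtype_val⟩ : C(Y₂, X))) := by
  rw [relTC_eq_one_iff_homotopic (h₁.prod h₂)]
  exact homotopic_fst_snd_restrict_prod_iff h₁ h₂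
end

section
/- If Y₁ and Y₂ are proper subspaces of the sphere Sⁿ, then TC_{Sⁿ}(Y₁ × Y₂) = 1; i.e., there is a continuous map assigning to each pair (y₁, y₂) ∈ Y₁ × Y₂ a path in Sⁿ from y₁ to y₂. -/
/-!
A proper subset `Y` of the sphere misses some point `v`, and `Sⁿ \ {v}` is homeomorphic to a
vector space by stereographic projection, hence contractible; so the inclusion `Y → Sⁿ` is
homotopic to a constant map at some `cᵢ`, and the homotopy is a path from each `y` to `cᵢ`
depending continuously on `y`. For `n ≥ 1` the sphere is path-connected, so the path
`y₁ ⤳ c₁ ⤳ c₂ ⤳ y₂` (the middle piece fixed, the last one the reversed homotopy) works.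
-/

open Set Metric ContinuousMap

instance contractibleSpace_sphere_compl_singleton {E : Type*} [NormedAddCommGroup E]
    [InnerProductSpace ℝ E] (v : sphere (0 : E) 1) :
    ContractibleSpace ({v}ᶜ : Set (sphere (0 : E) 1)) := by
  have hv : ‖(v : E)‖ = 1 := by simp
  have e := (stereographic hv).toHomeomorphSourceTarget
  rw [stereographic_source, stereographic_target] at e
  exact (e.trans (Homeomorph.Set.univ _)).contractibleSpace

theorem nullhomotopic_subtypeVal_of_ne_univ {E : Type*} [NormedAddCommGroup E]
    [InnerProductSpace ℝ E] {Y : Set (sphere (0 : E) 1)} (hY : Y ≠ univ) :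
    (⟨Subtype.val, continuous_subtype_val⟩ : C(Y, sphere (0 : E) 1)).Nullhomotopic := by
  obtain ⟨v, hv⟩ := (ne_univ_iff_exists_notMem Y).mp hY
  have hYv : Y ⊆ {v}ᶜ := fun y hy hyv => hv (hyv ▸ hy)
  exact ((id_nullhomotopic _).comp_right ⟨Subtype.val, continuous_subtype_val⟩).comp_left
    (ContinuousMap.inclusion hYv)

theorem ContinuousMap.exists_continuous_paths_of_nullhomotopic {X Y₁ Y₂ : Type*}
    [TopologicalSpace X] [TopologicalSpace Y₁] [TopologicalSpace Y₂] [PathConnectedSpace X]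
    {f₁ : C(Y₁, X)} {f₂ : C(Y₂, X)} (h₁ : f₁.Nullhomotopic) (h₂ : f₂.Nullhomotopic) :
    ∃ s : C(Y₁ × Y₂, C(unitInterval, X)), ∀ p, s p 0 = f₁ p.1 ∧ s p 1 = f₂ p.2 := by
  obtain ⟨c₁, ⟨H₁⟩⟩ := h₁
  obtain ⟨c₂, ⟨H₂⟩⟩ := h₂
  let γ := PathConnectedSpace.somePath c₁ c₂
  let F : ∀ p : Y₁ × Y₂, Path (f₁ p.1) (f₂ p.2) := fun p =>
    (H₁.evalAt p.1).trans (γ.trans (H₂.evalAt p.2).symm)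
  have hF : Continuous ↿F := by
    refine Path.trans_continuous_family _ ?_ _ (Path.trans_continuous_family _ ?_ _ ?_)
    · exact H₁.continuous.comp (continuous_snd.prodMk (continuous_fst.comp continuous_fst))
    · exact γ.continuous.comp continuous_snd
    · exact Path.symm_continuous_family _
        (H₂.continuous.comp (continuous_snd.prodMk (continuous_snd.comp continuous_fst)))
  exact ⟨ContinuousMap.curry ⟨↿F, hF⟩, fun p => ⟨(F p).source, (F p).target⟩⟩

/-- If `Y₁` and `Y₂` are proper subspaces of the sphere `Sⁿ` (`n ≥ 1`), then
`TC_{Sⁿ}(Y₁ × Y₂) = 1`: there is a continuous map assigning to each pair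
`(y₁, y₂) ∈ Y₁ × Y₂` a path in `Sⁿ` from `y₁` to `y₂`. -/
theorem stmt6 (n : ℕ) (hn : 1 ≤ n)
    (Y₁ Y₂ : Set (Metric.sphere (0 : EuclideanSpace ℝ (Fin (n + 1))) 1))
    (h₁ : Y₁ ≠ univ) (h₂ : Y₂ ≠ univ) :
    ∃ s : C(Y₁ × Y₂, C(unitInterval, Metric.sphere (0 : EuclideanSpace ℝ (Fin (n + 1))) 1)),
      ∀ p : Y₁ × Y₂, s p 0 = (p.1 : Metric.sphere (0 : EuclideanSpace ℝ (Fin (n + 1))) 1)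
        ∧ s p 1 = (p.2 : Metric.sphere (0 : EuclideanSpace ℝ (Fin (n + 1))) 1) := by
  have hrank : 1 < Module.rank ℝ (EuclideanSpace ℝ (Fin (n + 1))) := by
    rw [← Module.finrank_eq_rank, finrank_euclideanSpace_fin]
    exact_mod_cast Nat.succ_lt_succ (Nat.succ_le_iff.mp hn)
  have := isPathConnected_iff_pathConnectedSpace.mp (isPathConnected_sphere hrank 0 zero_le_one)
  exact exists_continuous_paths_of_nullhomotopic (nullhomotopic_subtypeVal_of_ne_univ h₁)
    (nullhomotopic_subtypeVal_of_ne_univ h₂)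
end

section
/- Let Y₁, Y₂ ⊆ X and Y₁', Y₂' ⊆ X', and suppose there are continuous maps f : X → X', f' : X' → X, α_j : Y_j → Y_j', α_j' : Y_j' → Y_j (j = 1, 2) such that for each j, ι_j' ≃ f ∘ ι_j ∘ α_j' and ι_j ≃ f' ∘ ι_j' ∘ α_j (homotopy of maps into X' and X, respectively), where ι_j, ι_j' denote inclusions. Then TC_{X'}(Y₁' × Y₂') = TC_X(Y₁ × Y₂). -/
open Set

/-- The inclusion of a subspace, as a continuous map. -/
def incl {X : Type*} [TopologicalSpace X] (Y : Set X) : C(Y, X) :=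
  ⟨Subtype.val, continuous_subtype_val⟩

/-!
A continuous choice of paths from `p.1` to `p.2` over `U ⊆ A` is the same as a homotopy between
the two projections `U → X`. Pull an open cover of `Y₁ × Y₂` back along `α₁' × α₂'`: on each
piece, `pr₁ ≃ f ∘ ι₁ ∘ α₁' ∘ pr₁ ≃ f ∘ ι₂ ∘ α₂' ∘ pr₂ ≃ pr₂`, the middle homotopy being `f`
applied to the given motion planner. Hence `TC_{X'}(Y₁' × Y₂') ≤ TC_X(Y₁ × Y₂)`, and the
hypotheses are symmetric.
-/

open ContinuousMap unitInterval

theorem exists_pathSection_iff_homotopic {V X : Type*} [TopologicalSpace V] [TopologicalSpace X]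
    (a b : C(V, X)) :
    (∃ s : C(V, C(I, X)), ∀ p, s p 0 = a p ∧ s p 1 = b p) ↔ a.Homotopic b := by
  constructor
  · rintro ⟨s, hs⟩
    exact ⟨{ toContinuousMap := s.uncurry.comp prodSwap
             map_zero_left := fun p => (hs p).1
             map_one_left := fun p => (hs p).2 }⟩
  · rintro ⟨H⟩
    exact ⟨(H.toContinuousMap.comp prodSwap).curry, fun p => ⟨H.apply_zero p, H.apply_one p⟩⟩

section

variable {X X' : Type*} [TopologicalSpace X] [TopologicalSpace X']

theorem relTC_le_of_homotopic {A : Set (X × X)} {B : Set (X' × X')} (g : C(B, A))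
    (f : C(X, X'))
    (h_fst : (fst.comp (incl B)).Homotopic (f.comp (fst.comp ((incl A).comp g))))
    (h_snd : (snd.comp (incl B)).Homotopic (f.comp (snd.comp ((incl A).comp g)))) :
    relTC X' B ≤ relTC X A := by
  refine sInf_le_sInf ?_
  rintro _ ⟨k, rfl, U, hU_open, hU_cover, hU_section⟩
  refine ⟨k, rfl, fun i => g ⁻¹' U i, fun i => (hU_open i).preimage g.continuous, ?_, fun i => ?_⟩
  · simp only [← preimage_iUnion, hU_cover, preimage_univ]
  · let gU : C(g ⁻¹' U i, U i) := g.restrictPreimage (U i)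
    have hU : (fst.comp ((incl A).comp (incl (U i)))).Homotopic
        (snd.comp ((incl A).comp (incl (U i)))) :=
      (exists_pathSection_iff_homotopic _ _).1 (hU_section i)
    refine (exists_pathSection_iff_homotopic
      (fst.comp ((incl B).comp (incl _))) (snd.comp ((incl B).comp (incl _)))).2 ?_
    exact ((h_fst.comp (Homotopic.refl (incl _))).trans
      ((Homotopic.refl f).comp (hU.comp (Homotopic.refl gU)))).trans
      (h_snd.comp (Homotopic.refl (incl _))).symm

def setProdMap {Y₁ Y₂ : Set X} {Y₁' Y₂' : Set X'} (α₁ : C(Y₁', Y₁)) (α₂ : C(Y₂', Y₂)) :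
    C(↥(Y₁' ×ˢ Y₂'), ↥(Y₁ ×ˢ Y₂)) :=
  ContinuousMap.comp ((Homeomorph.Set.prod Y₁ Y₂).symm : C(Y₁ × Y₂, ↥(Y₁ ×ˢ Y₂)))
    ((α₁.prodMap α₂).comp (Homeomorph.Set.prod Y₁' Y₂' : C(↥(Y₁' ×ˢ Y₂'), Y₁' × Y₂')))

theorem relTC_prod_le_of_homotopic {Y₁ Y₂ : Set X} {Y₁' Y₂' : Set X'}
    (f : C(X, X')) (α₁ : C(Y₁', Y₁)) (α₂ : C(Y₂', Y₂))
    (h₁ : (incl Y₁').Homotopic (f.comp ((incl Y₁).comp α₁)))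
    (h₂ : (incl Y₂').Homotopic (f.comp ((incl Y₂).comp α₂))) :
    relTC X' (Y₁' ×ˢ Y₂') ≤ relTC X (Y₁ ×ˢ Y₂) := by
  let e : C(↥(Y₁' ×ˢ Y₂'), Y₁' × Y₂') := Homeomorph.Set.prod Y₁' Y₂'
  exact relTC_le_of_homotopic (setProdMap α₁ α₂) f
    (h₁.comp (.refl (fst.comp e))) (h₂.comp (.refl (snd.comp e)))

end

/-- Homotopy invariance of relative topological complexity: if the squares
`ι_j' ≃ f ∘ ι_j ∘ α_j'` and `ι_j ≃ f' ∘ ι_j' ∘ α_j` commute up to homotopy for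
`j = 1, 2`, then `TC_{X'}(Y₁' × Y₂') = TC_X(Y₁ × Y₂)`. -/
theorem stmt7 (X X' : Type*) [TopologicalSpace X] [TopologicalSpace X']
    (Y₁ Y₂ : Set X) (Y₁' Y₂' : Set X')
    (f : C(X, X')) (f' : C(X', X))
    (α₁ : C(Y₁, Y₁')) (α₂ : C(Y₂, Y₂'))
    (α₁' : C(Y₁', Y₁)) (α₂' : C(Y₂', Y₂))
    (h₁ : (incl Y₁').Homotopic (f.comp ((incl Y₁).comp α₁')))
    (h₂ : (incl Y₂').Homotopic (f.comp ((incl Y₂).comp α₂')))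
    (h₃ : (incl Y₁).Homotopic (f'.comp ((incl Y₁').comp α₁)))
    (h₄ : (incl Y₂).Homotopic (f'.comp ((incl Y₂').comp α₂))) :
    relTC X' (Y₁' ×ˢ Y₂') = relTC X (Y₁ ×ˢ Y₂) :=
  le_antisymm (relTC_prod_le_of_homotopic f α₁' α₂' h₁ h₂)
    (relTC_prod_le_of_homotopic f' α₁ α₂ h₃ h₄)
end

section
/- For any space Y with at least n points, TC_{Cⁿ(Y×I)}(Cⁿ(Y) × Cⁿ(Y)) ≤ TC(Yⁿ). -/
open Set

/-- The ordered configuration space of `n` distinct points in `W`. -/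
def Conf (n : ℕ) (W : Type*) : Set (Fin n → W) :=
  {w | Function.Injective w}

/-- The subspace of `Cⁿ(Y × I)` of configurations lying in `Y × {0}`,
i.e. the copy of `Cⁿ(Y)` inside `Cⁿ(Y × I)`. -/
def baseConf (n : ℕ) (Y : Type*) [TopologicalSpace Y] :
    Set ↥(Conf n (Y × unitInterval)) :=
  {c | ∀ i, ((c : Fin n → Y × unitInterval) i).2 = 0}

/-!
Pull a motion planner on `Yⁿ` back along the projection `Cⁿ(Y) × Cⁿ(Y) → Yⁿ × Yⁿ`.
A path `γ` in `Yⁿ` between two configurations may make points collide at intermediate times,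
so lift it to `Y × I` by moving the `j`-th point along `γ` at height `t (1 - t) c_j`, with
distinct constants `c_j`: for `0 < t < 1` the heights separate the points, and at `t = 0, 1`
the endpoints of `γ` are configurations.
-/

open unitInterval

theorem relTC_le_of_lift_sections {X Z : Type*} [TopologicalSpace X] [TopologicalSpace Z]
    {A : Set (X × X)} {B : Set (Z × Z)} (g : C(A, B))
    (hlift : ∀ (V : Set A) (s : C(V, C(I, Z))),
      (∀ p : V, s p 0 = (g p).1.1 ∧ s p 1 = (g p).1.2) →
      ∃ t : C(V, C(I, X)), ∀ p : V, t p 0 = p.1.1.1 ∧ t p 1 = p.1.1.2) :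
    relTC X A ≤ relTC Z B := by
  refine le_sInf ?_
  rintro _ ⟨k, rfl, U, hUo, hUcov, hUs⟩
  refine sInf_le ⟨k, rfl, fun i => g ⁻¹' U i, fun i => (hUo i).preimage g.continuous, ?_,
    fun i => ?_⟩
  · simp [← preimage_iUnion, hUcov]
  · obtain ⟨s, hs⟩ := hUs i
    exact hlift _ (s.comp ⟨fun p => ⟨g p, p.2⟩, by fun_prop⟩) fun p => hs _

section LiftedPath

variable {ι Y : Type*} [TopologicalSpace Y]

def liftedPath (c : ι → I) (γ : C(I, ι → Y)) : C(I, ι → Y × I) :=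
  ⟨fun t j => (γ t j, t * σ t * c j), by fun_prop⟩

theorem continuous_liftedPath (c : ι → I) :
    Continuous (liftedPath c : C(I, ι → Y) → C(I, ι → Y × I)) := by
  refine ContinuousMap.continuous_of_continuous_uncurry _ ?_
  simp only [Function.uncurry_def, liftedPath, ContinuousMap.coe_mk]
  fun_prop

theorem liftedPath_zero (c : ι → I) (γ : C(I, ι → Y)) :
    liftedPath c γ 0 = fun j => (γ 0 j, 0) := by
  simp [liftedPath]

theorem liftedPath_one (c : ι → I) (γ : C(I, ι → Y)) :
    liftedPath c γ 1 = fun j => (γ 1 j, 0) := by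
  simp [liftedPath]

theorem liftedPath_injective {c : ι → I} (hc : c.Injective) {γ : C(I, ι → Y)}
    (h₀ : (γ 0).Injective) (h₁ : (γ 1).Injective) (t : I) :
    (liftedPath c γ t).Injective := by
  intro j k hjk
  simp only [liftedPath, ContinuousMap.coe_mk, Prod.mk.injEq] at hjk
  obtain ⟨hγ, hh⟩ := hjk
  rcases eq_or_ne (t * σ t) 0 with ht | ht
  · rcases mul_eq_zero.mp ht with rfl | ht
    · exact h₀ hγ
    · rw [symm_eq_zero] at ht
      subst ht
      exact h₁ hγ
  · exact hc (mul_left_cancel₀ ht hh)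

end LiftedPath

instance : Infinite I := (Set.Icc_infinite zero_lt_one).to_subtype

section BaseConf

variable {n : ℕ} {Y : Type*} [TopologicalSpace Y]

theorem eq_of_mem_baseConf {x : Conf n (Y × I)} (hx : x ∈ baseConf n Y) :
    (x : Fin n → Y × I) = fun j => (((x : Fin n → Y × I) j).1, 0) :=
  funext fun j => Prod.ext rfl (hx j)

theorem injective_fst_of_mem_baseConf {x : Conf n (Y × I)} (hx : x ∈ baseConf n Y) :
    Function.Injective fun j => ((x : Fin n → Y × I) j).1 := by
  intro j k hjk
  refine x.2 ?_
  rw [eq_of_mem_baseConf hx]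
  exact Prod.ext hjk rfl

theorem continuous_conf_fst :
    Continuous fun (x : Conf n (Y × I)) j => ((x : Fin n → Y × I) j).1 :=
  continuous_pi fun j => continuous_fst.comp ((continuous_apply j).comp continuous_subtype_val)

def baseConfProj :
    C(↥(baseConf n Y ×ˢ baseConf n Y), ↥(univ : Set ((Fin n → Y) × (Fin n → Y)))) :=
  ⟨fun p => ⟨(fun j => ((p.1.1 : Fin n → Y × I) j).1, fun j => ((p.1.2 : Fin n → Y × I) j).1),
    trivial⟩,
    ((continuous_conf_fst.comp (continuous_fst.comp continuous_subtype_val)).prodMk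
      (continuous_conf_fst.comp (continuous_snd.comp continuous_subtype_val))).subtype_mk _⟩

theorem exists_lift_baseConfProj {c : Fin n → I} (hc : c.Injective)
    (V : Set ↥(baseConf n Y ×ˢ baseConf n Y)) (s : C(V, C(I, Fin n → Y)))
    (hs : ∀ p : V, s p 0 = (baseConfProj p.1).1.1 ∧ s p 1 = (baseConfProj p.1).1.2) :
    ∃ t : C(V, C(I, Conf n (Y × I))), ∀ p : V, t p 0 = p.1.1.1 ∧ t p 1 = p.1.1.2 := by
  have hinj (p : V) (t : I) : (liftedPath c (s p) t).Injective := by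
    refine liftedPath_injective hc ?_ ?_ t
    · rw [(hs p).1]; exact injective_fst_of_mem_baseConf p.1.2.1
    · rw [(hs p).2]; exact injective_fst_of_mem_baseConf p.1.2.2
  refine ⟨ContinuousMap.curry ⟨fun q => ⟨liftedPath c (s q.1) q.2, hinj q.1 q.2⟩, ?_⟩,
    fun p => ⟨Subtype.ext ?_, Subtype.ext ?_⟩⟩
  · exact (ContinuousEval.continuous_eval.comp
      (((continuous_liftedPath c).comp (s.continuous.comp continuous_fst)).prodMk
        continuous_snd)).subtype_mk _
  · show liftedPath c (s p) 0 = _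
    rw [liftedPath_zero, (hs p).1]
    exact (eq_of_mem_baseConf p.1.2.1).symm
  · show liftedPath c (s p) 1 = _
    rw [liftedPath_one, (hs p).2]
    exact (eq_of_mem_baseConf p.1.2.2).symm

end BaseConf

theorem stmt15_general (n : ℕ) (Y : Type*) [TopologicalSpace Y] :
    relTC ↥(Conf n (Y × unitInterval)) (baseConf n Y ×ˢ baseConf n Y) ≤
      relTC (Fin n → Y) univ :=
  relTC_le_of_lift_sections baseConfProj
    (exists_lift_baseConfProj (Fin.valEmbedding.trans (Infinite.natEmbedding I)).injective)

/-- For a space `Y` with at least `n` points,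
`TC_{Cⁿ(Y×I)}(Cⁿ(Y) × Cⁿ(Y)) ≤ TC(Yⁿ)`. -/
theorem stmt15 (n : ℕ) (Y : Type*) [TopologicalSpace Y]
    (hY : ∃ f : Fin n → Y, Function.Injective f) :
    relTC ↥(Conf n (Y × unitInterval)) (baseConf n Y ×ˢ baseConf n Y) ≤
      relTC (Fin n → Y) univ :=
  stmt15_general n Y
end

section
/- For X = ℝ and n = 2, TC_{ℝ²}(C²(ℝ) × C²(ℝ)) = 1: the map σ sending ((x₁,x₂),(y₁,y₂)) with x₁ < x₂ to the coordinatewise path through 0 and with x₁ > x₂ to the coordinatewise path through 1 is a continuous global section of the endpoint fibration taking values in paths through ℝ² that stay in C²(ℝ) at their endpoints. -/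
open Set

/-- The ordered configuration space `C²(ℝ)` of two distinct points in `ℝ`. -/
def conf2 : Set (ℝ × ℝ) := {p | p.1 ≠ p.2}

/-- The path `σ_z(x,y)` that moves linearly from `x` to `z` on `[0,1/2]`
and from `z` to `y` on `[1/2,1]`. -/
noncomputable def sigPath (z x y : ℝ) (t : unitInterval) : ℝ :=
  if (t : ℝ) ≤ 1 / 2 then (1 - 2 * (t : ℝ)) * x + 2 * (t : ℝ) * z
  else (2 * (t : ℝ) - 1) * y + (2 - 2 * (t : ℝ)) * z

/-!
On `C²(ℝ)` the relation `x₁ < x₂` is both open and closed, so the two-case formula for `σ` is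
continuous. Hence the single open set `C²(ℝ) × C²(ℝ)` carries a section of the endpoint map,
and no cover by zero open sets exists since the space is nonempty.
-/

@[fun_prop]
theorem Continuous.sigPath {α : Type*} [TopologicalSpace α] {z x y : α → ℝ}
    {t : α → unitInterval} (hz : Continuous z) (hx : Continuous x) (hy : Continuous y)
    (ht : Continuous t) : Continuous fun a => sigPath (z a) (x a) (y a) (t a) := by
  unfold _root_.sigPath
  refine Continuous.if_le (by fun_prop) (by fun_prop) (by fun_prop) continuous_const ?_
  intro a h
  rw [h]
  ring

@[simp]
theorem sigPath_zero (z x y : ℝ) : sigPath z x y 0 = x := by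
  norm_num [sigPath]

@[simp]
theorem sigPath_one (z x y : ℝ) : sigPath z x y 1 = y := by
  norm_num [sigPath]

theorem isClopen_conf2_lt : IsClopen {p : conf2 | p.1.1 < p.1.2} := by
  have hle : {p : conf2 | p.1.1 < p.1.2} = {p : conf2 | p.1.1 ≤ p.1.2} := by
    ext p
    exact (p.2 : p.1.1 ≠ p.1.2).le_iff_lt.symm
  refine ⟨?_, isOpen_lt (by fun_prop) (by fun_prop)⟩
  rw [hle]
  exact isClosed_le (by fun_prop) (by fun_prop)

noncomputable def sigmaSection : C(conf2 × conf2, C(unitInterval, ℝ × ℝ)) :=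
  ContinuousMap.curry
    { toFun := fun q =>
        if (q.1.1 : ℝ × ℝ).1 < (q.1.1 : ℝ × ℝ).2 then
          (sigPath 0 (q.1.1 : ℝ × ℝ).1 (q.1.2 : ℝ × ℝ).1 q.2,
           sigPath 0 (q.1.1 : ℝ × ℝ).2 (q.1.2 : ℝ × ℝ).2 q.2)
        else
          (sigPath 1 (q.1.1 : ℝ × ℝ).1 (q.1.2 : ℝ × ℝ).1 q.2,
           sigPath 1 (q.1.1 : ℝ × ℝ).2 (q.1.2 : ℝ × ℝ).2 q.2)
      continuous_toFun := by
        have hclopen : IsClopen {q : (conf2 × conf2) × unitInterval |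
            (q.1.1 : ℝ × ℝ).1 < (q.1.1 : ℝ × ℝ).2} :=
          isClopen_conf2_lt.preimage (by fun_prop)
        refine Continuous.if (fun q hq => ?_) (by fun_prop) (by fun_prop)
        rw [hclopen.frontier_eq] at hq
        exact hq.elim }

@[simp]
theorem sigmaSection_zero (x y : conf2) : sigmaSection (x, y) 0 = x := by
  simp only [sigmaSection, ContinuousMap.curry_apply, ContinuousMap.coe_mk, sigPath_zero]
  split_ifs <;> rfl

@[simp]
theorem sigmaSection_one (x y : conf2) : sigmaSection (x, y) 1 = y := by
  simp only [sigmaSection, ContinuousMap.curry_apply, ContinuousMap.coe_mk, sigPath_one]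
  split_ifs <;> rfl

theorem relTC_eq_one {X : Type*} [TopologicalSpace X] {A : Set (X × X)} [Nonempty A]
    (s : C(A, C(unitInterval, X))) (hs : ∀ p : A, s p 0 = p.1.1 ∧ s p 1 = p.1.2) :
    relTC X A = 1 := by
  refine le_antisymm (sInf_le ⟨1, rfl, fun _ => univ, fun _ => isOpen_univ, iUnion_const _,
    fun _ => ⟨s.comp ⟨Subtype.val, continuous_subtype_val⟩, fun p => hs p⟩⟩) (le_sInf ?_)
  rintro _ ⟨k, rfl, U, -, hcover, -⟩
  rcases k with _ | k
  · have hmem := hcover ▸ mem_univ (Classical.arbitrary A)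
    simp at hmem
  · exact_mod_cast k.succ_pos

/-- `TC_{ℝ²}(C²(ℝ) × C²(ℝ)) = 1`: the map `σ` sending `((x₁,x₂),(y₁,y₂))` with
`x₁ < x₂` to the coordinatewise path through `0` and with `x₁ > x₂` to the
coordinatewise path through `1` is a continuous global section of the endpoint
fibration. -/
theorem stmt17 :
    (∃ s : C(↥conf2 × ↥conf2, C(unitInterval, ℝ × ℝ)),
      (∀ (x y : ↥conf2) (t : unitInterval),
        s (x, y) t =
          if (x : ℝ × ℝ).1 < (x : ℝ × ℝ).2 then
            (sigPath 0 (x : ℝ × ℝ).1 (y : ℝ × ℝ).1 t,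
             sigPath 0 (x : ℝ × ℝ).2 (y : ℝ × ℝ).2 t)
          else
            (sigPath 1 (x : ℝ × ℝ).1 (y : ℝ × ℝ).1 t,
             sigPath 1 (x : ℝ × ℝ).2 (y : ℝ × ℝ).2 t)) ∧
      (∀ x y : ↥conf2, s (x, y) 0 = (x : ℝ × ℝ) ∧ s (x, y) 1 = (y : ℝ × ℝ))) ∧
    relTC (ℝ × ℝ) (conf2 ×ˢ conf2) = 1 := by
  refine ⟨⟨sigmaSection, fun x y t => rfl,
    fun x y => ⟨sigmaSection_zero x y, sigmaSection_one x y⟩⟩, ?_⟩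
  have : Nonempty ↥(conf2 ×ˢ conf2) := ⟨⟨((0, 1), (0, 1)), by norm_num [conf2]⟩⟩
  exact relTC_eq_one (sigmaSection.comp (Homeomorph.Set.prod conf2 conf2)) fun p =>
    ⟨sigmaSection_zero _ _, sigmaSection_one _ _⟩
end
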